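/- Let A, B be n×n positive definite Hermitian matrices. If tr(A⁻¹B) ≤ C₁ and det A ≤ C₂ · det B for constants C₁, C₂ ≥ 1, then tr(B⁻¹A) ≤ (1/(n-1)!) · C₁^(n-1) · C₂. -/

import Mathlib

/-!
Writing `A = S²` with `S = √A`, the matrix `M = S⁻¹ B S⁻¹` is positive definite with
`tr (A⁻¹ B) = tr M`, `tr (B⁻¹ A) = tr M⁻¹` and `det M = det B / det A`, so everything is a
statement about the eigenvalues `μᵢ > 0` of `M`. Now `∑ 1/μᵢ = e_{n-1}(μ) / e_n(μ)`, and
`(n-1)! e_{n-1}(μ) ≤ (∑ μᵢ)^(n-1)` follows by induction from `(k+1) e_{k+1} ≤ e_k ∑ μᵢ`: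
each `(k+1)`-subset arises from exactly `k+1` pairs of a `k`-subset and an element outside it.
-/

open Finset Nat
open scoped ComplexOrder MatrixOrder

namespace Finset

variable {ι : Type*} [DecidableEq ι]

theorem sum_powersetCard_succ_sum_erase {M : Type*} [AddCommMonoid M] (s : Finset ι) (k : ℕ)
    (f : Finset ι → ι → M) :
    ∑ u ∈ s.powersetCard (k + 1), ∑ i ∈ u, f (u.erase i) i =
      ∑ t ∈ s.powersetCard k, ∑ i ∈ s \ t, f t i := by
  rw [sum_sigma', sum_sigma']
  refine sum_bij' (fun p _ => ⟨p.1.erase p.2, p.2⟩) (fun p _ => ⟨insert p.2 p.1, p.2⟩)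
    ?_ ?_ ?_ ?_ (fun _ _ => rfl)
  · rintro ⟨u, i⟩ hp
    simp only [mem_sigma, mem_powersetCard, mem_sdiff] at hp ⊢
    obtain ⟨⟨hus, hcard⟩, hiu⟩ := hp
    exact ⟨⟨(erase_subset _ _).trans hus, by rw [card_erase_of_mem hiu, hcard]; rfl⟩,
      hus hiu, notMem_erase _ _⟩
  · rintro ⟨t, i⟩ hp
    simp only [mem_sigma, mem_powersetCard, mem_sdiff] at hp ⊢
    obtain ⟨⟨hts, hcard⟩, his, hit⟩ := hp
    exact ⟨⟨insert_subset his hts, by rw [card_insert_of_notMem hit, hcard]⟩, mem_insert_self _ _⟩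
  · rintro ⟨u, i⟩ hp
    simp [insert_erase (mem_sigma.mp hp).2]
  · rintro ⟨t, i⟩ hp
    simp [erase_insert (mem_sdiff.mp (mem_sigma.mp hp).2).2]

section OrderedSemiring

variable {R : Type*} [CommSemiring R] [PartialOrder R] [IsOrderedRing R] {x : ι → R}

theorem succ_mul_esymm_succ_le (hx : ∀ i, 0 ≤ x i) (s : Finset ι) (k : ℕ) :
    (k + 1) * (s.val.map x).esymm (k + 1) ≤ (s.val.map x).esymm k * ∑ i ∈ s, x i := by
  have hcount : (k + 1) * (s.val.map x).esymm (k + 1) =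
      ∑ u ∈ s.powersetCard (k + 1), ∑ i ∈ u, (∏ j ∈ u.erase i, x j) * x i := by
    rw [esymm_map_val, mul_sum]
    refine sum_congr rfl fun u hu => ?_
    rw [sum_congr rfl fun i hi => prod_erase_mul u x hi, sum_const,
      (mem_powersetCard.mp hu).2, nsmul_eq_mul]
    push_cast; rfl
  rw [hcount, sum_powersetCard_succ_sum_erase s k fun t i => (∏ j ∈ t, x j) * x i,
    esymm_map_val, sum_mul]
  gcongr with t
  rw [mul_sum]
  exact sum_le_sum_of_subset_of_nonneg sdiff_subset fun i _ _ =>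
    mul_nonneg (prod_nonneg fun j _ => hx j) (hx i)

theorem factorial_mul_esymm_le_sum_pow (hx : ∀ i, 0 ≤ x i) (s : Finset ι) (k : ℕ) :
    k ! * (s.val.map x).esymm k ≤ (∑ i ∈ s, x i) ^ k := by
  induction k with
  | zero => simp [esymm_map_val]
  | succ k ih =>
    calc ((k + 1)! : R) * (s.val.map x).esymm (k + 1)
        = k ! * ((k + 1) * (s.val.map x).esymm (k + 1)) := by
          rw [Nat.factorial_succ]; push_cast; ring
      _ ≤ k ! * ((s.val.map x).esymm k * ∑ i ∈ s, x i) :=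
          mul_le_mul_of_nonneg_left (succ_mul_esymm_succ_le hx s k) (by positivity)
      _ ≤ (∑ i ∈ s, x i) ^ k * ∑ i ∈ s, x i := by
          rw [← mul_assoc]; gcongr; exact sum_nonneg fun i _ => hx i
      _ = (∑ i ∈ s, x i) ^ (k + 1) := (pow_succ _ _).symm

theorem sum_prod_erase_le_esymm (hx : ∀ i, 0 ≤ x i) (s : Finset ι) :
    ∑ i ∈ s, ∏ j ∈ s.erase i, x j ≤ (s.val.map x).esymm (#s - 1) := by
  have herase_inj : Set.InjOn s.erase s := fun i hi j _ h => by
    by_contra hne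
    exact notMem_erase i s (h ▸ mem_erase.mpr ⟨hne, hi⟩)
  rw [← sum_image (g := s.erase) (f := fun t => ∏ j ∈ t, x j) herase_inj, esymm_map_val]
  refine sum_le_sum_of_subset_of_nonneg ?_ fun t _ _ => prod_nonneg fun j _ => hx j
  simp only [subset_iff, mem_image, mem_powersetCard]
  rintro _ ⟨i, hi, rfl⟩
  exact ⟨erase_subset _ _, card_erase_of_mem hi⟩

end OrderedSemiring

theorem sum_inv_mul_prod_eq_sum_prod_erase {K : Type*} [Semifield K] {x : ι → K}
    (hx : ∀ i, x i ≠ 0) (s : Finset ι) :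
    ∑ i ∈ s, (x i)⁻¹ * ∏ j ∈ s, x j = ∑ i ∈ s, ∏ j ∈ s.erase i, x j :=
  sum_congr rfl fun i hi => by rw [← mul_prod_erase s x hi, inv_mul_cancel_left₀ (hx i)]

theorem sum_inv_le_sum_pow_div {K : Type*} [Semifield K] [LinearOrder K] [IsStrictOrderedRing K]
    {x : ι → K} (hx : ∀ i, 0 < x i) (s : Finset ι) :
    ∑ i ∈ s, (x i)⁻¹ ≤ (∑ i ∈ s, x i) ^ (#s - 1) / ((#s - 1)! * ∏ i ∈ s, x i) := by
  rw [le_div_iff₀ (mul_pos (by positivity) (prod_pos fun i _ => hx i))]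
  calc (∑ i ∈ s, (x i)⁻¹) * ((#s - 1)! * ∏ i ∈ s, x i)
      = (#s - 1)! * ∑ i ∈ s, ∏ j ∈ s.erase i, x j := by
        rw [← sum_inv_mul_prod_eq_sum_prod_erase (fun i => (hx i).ne') s, sum_mul, mul_sum]
        exact sum_congr rfl fun i _ => by ring
    _ ≤ (#s - 1)! * (s.val.map x).esymm (#s - 1) := by
        gcongr; exact sum_prod_erase_le_esymm (fun i => (hx i).le) s
    _ ≤ (∑ i ∈ s, x i) ^ (#s - 1) := factorial_mul_esymm_le_sum_pow (fun i => (hx i).le) s _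

end Finset

namespace Matrix

variable {𝕜 : Type*} [RCLike 𝕜] {n : Type*} [Fintype n] [DecidableEq n]

theorem IsHermitian.trace_cfc {A : Matrix n n 𝕜} (hA : A.IsHermitian) (f : ℝ → ℝ) :
    (cfc f A).trace = ∑ i, (f (hA.eigenvalues i) : 𝕜) := by
  rw [hA.cfc_eq, IsHermitian.cfc, Unitary.conjStarAlgAut_apply, trace_mul_cycle,
    Unitary.coe_star_mul_self, Matrix.one_mul, trace_diagonal]
  rfl

theorem PosDef.trace_inv {A : Matrix n n 𝕜} (hA : A.PosDef) :
    A⁻¹.trace = ∑ i, (((hA.1.eigenvalues i)⁻¹ : ℝ) : 𝕜) := by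
  rw [nonsing_inv_eq_ringInverse, ← cfc_ringInverse_id (R := ℝ) A hA.isUnit hA.1.isSelfAdjoint,
    hA.1.trace_cfc]

theorem PosDef.exists_posDef_trace_inv_mul_eq {A B : Matrix n n 𝕜} (hA : A.PosDef)
    (hB : B.PosDef) : ∃ M : Matrix n n 𝕜, M.PosDef ∧ (A⁻¹ * B).trace = M.trace ∧
      (B⁻¹ * A).trace = M⁻¹.trace ∧ M.det = B.det / A.det := by
  set S := CFC.sqrt A
  have hSS : S * S = A := CFC.sqrt_mul_sqrt_self A hA.posSemidef.nonneg
  have hS : S.IsHermitian := (CFC.sqrt_nonneg A).isSelfAdjoint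
  have hSdet : IsUnit S.det := by
    rw [isUnit_iff_ne_zero]
    intro h
    simpa [← hSS, h] using hA.det_pos.ne'
  have hSinv : IsUnit S⁻¹ := (isUnit_nonsing_inv_iff).mpr ((isUnit_iff_isUnit_det S).mpr hSdet)
  refine ⟨S⁻¹ * B * S⁻¹, ?_, ?_, ?_, ?_⟩
  · have := (IsUnit.posDef_star_left_conjugate_iff hSinv).mpr hB
    rwa [star_eq_conjTranspose, hS.inv.eq] at this
  · rw [← hSS, mul_inv_rev, Matrix.mul_assoc, trace_mul_comm]
  · rw [mul_inv_rev, mul_inv_rev, nonsing_inv_nonsing_inv S hSdet, ← hSS, trace_mul_cycle']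
  · rw [← hSS]
    simp only [det_mul, det_nonsing_inv, Ring.inverse_eq_inv']
    field_simp

end Matrix

theorem trace_inv_mul_le_general (n : ℕ) (A B : Matrix (Fin n) (Fin n) ℝ)
    (hA : A.PosDef) (hB : B.PosDef) (C₁ C₂ : ℝ)
    (htr : Matrix.trace (A⁻¹ * B) ≤ C₁) (hdet : A.det ≤ C₂ * B.det) :
    Matrix.trace (B⁻¹ * A) ≤ (1 / (Nat.factorial (n - 1) : ℝ)) * C₁ ^ (n - 1) * C₂ := by
  obtain ⟨M, hM, htrM, htrMinv, hdetM⟩ := hA.exists_posDef_trace_inv_mul_eq hB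
  set μ := hM.1.eigenvalues
  have hμ : ∀ i, 0 < μ i := hM.eigenvalues_pos
  have hsum : ∑ i, μ i ≤ C₁ := by
    simpa [htrM, hM.1.trace_eq_sum_eigenvalues] using htr
  have hprod : (∏ i, μ i)⁻¹ ≤ C₂ := by
    have : ∏ i, μ i = B.det / A.det := by simpa [μ, hM.1.det_eq_prod_eigenvalues] using hdetM
    rw [this, inv_div, div_le_iff₀ hB.det_pos]
    exact hdet
  calc Matrix.trace (B⁻¹ * A) = ∑ i, (μ i)⁻¹ := by simp [htrMinv, hM.trace_inv, μ]
    _ ≤ (∑ i, μ i) ^ (n - 1) / ((n - 1)! * ∏ i, μ i) := by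
        simpa using sum_inv_le_sum_pow_div hμ univ
    _ = (∑ i, μ i) ^ (n - 1) / (n - 1)! * (∏ i, μ i)⁻¹ := by ring
    _ ≤ C₁ ^ (n - 1) / (n - 1)! * C₂ := by
        have hsum_nonneg : 0 ≤ ∑ i, μ i := sum_nonneg fun i _ => (hμ i).le
        have hC₁ : 0 ≤ C₁ := hsum_nonneg.trans hsum
        gcongr
        exact inv_nonneg.mpr (prod_pos fun i _ => hμ i).le
    _ = 1 / ((n - 1)! : ℝ) * C₁ ^ (n - 1) * C₂ := by ring

/-- If A, B are positive definite with tr(A⁻¹B) ≤ C₁ and det A ≤ C₂ det B, C₁, C₂ ≥ 1,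
then tr(B⁻¹A) ≤ (1/(n-1)!) C₁^(n-1) C₂. -/
theorem trace_inv_mul_le (n : ℕ) (A B : Matrix (Fin n) (Fin n) ℝ)
    (hA : A.PosDef) (hB : B.PosDef) (C₁ C₂ : ℝ) (hC₁ : 1 ≤ C₁) (hC₂ : 1 ≤ C₂)
    (htr : Matrix.trace (A⁻¹ * B) ≤ C₁) (hdet : A.det ≤ C₂ * B.det) :
    Matrix.trace (B⁻¹ * A) ≤ (1 / (Nat.factorial (n - 1) : ℝ)) * C₁ ^ (n - 1) * C₂ :=
  trace_inv_mul_le_general n A B hA hB C₁ C₂ htr hdet
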